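/- Let q be a positive integer and A ⊆ Z_q a set with |A| = αq, α > 0. Suppose that the least prime factor of q is greater than 2α^{-1} + 3. Then there exists a set X ⊆ Z_q with |X| ≤ α^{-1} + 1 such that X·(A−A) = Z_q, i.e., every element of Z_q can be written as x·(a − a') with x ∈ X and a, a' ∈ A. -/

import Mathlib

/-!
Put m = ⌊α⁻¹⌋ + 1, so that m|A| > q. For any g ∈ Z_q the m translates A + c g, 0 ≤ c < m, cannot
be pairwise disjoint, and a collision gives d g ∈ A − A for some 0 < d < m. As m is below the least
prime factor of q, such d is invertible modulo q, so X = {d⁻¹ : 0 < d < m} works.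
-/

open Finset Pointwise

theorem nsmul_sub_nsmul_eq_sub_of_add_nsmul_eq {G : Type*} [AddCommGroup G] {a a' g : G} {c c' : ℕ}
    (hle : c' ≤ c) (h : a + c • g = a' + c' • g) : (c - c') • g = a' - a := by
  rw [sub_nsmul g hle, ← sub_eq_add_neg, sub_eq_sub_iff_add_eq_add, add_comm, h]

theorem exists_nsmul_mem_sub_of_card_lt {G : Type*} [AddCommGroup G] [Fintype G] [DecidableEq G]
    {A : Finset G} {n : ℕ} (h : Fintype.card G < n * #A) (g : G) :
    ∃ d ∈ Ico 1 n, d • g ∈ A - A := by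
  obtain ⟨⟨c, a⟩, hca, ⟨c', a'⟩, hca', hne, heq⟩ :=
    exists_ne_map_eq_of_card_lt_of_maps_to (s := range n ×ˢ A) (t := univ)
      (f := fun p => p.2 + p.1 • g) (by rwa [card_univ, card_product, card_range])
      (fun _ _ => mem_coe.2 (mem_univ _))
  simp only [mem_product, mem_range] at hca hca' heq
  wlog hlt : c' < c generalizing c a c' a'
  · rcases (not_lt.1 hlt).lt_or_eq with hlt' | rfl
    · exact this c' a' c a hne.symm heq.symm hca' hca hlt'
    · exact absurd (by rw [(add_left_inj _).1 heq]) hne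
  exact ⟨c - c', mem_Ico.2 ⟨by omega, by omega⟩,
    mem_sub.2 ⟨a', hca'.2, a, hca.2, (nsmul_sub_nsmul_eq_sub_of_add_nsmul_eq hlt.le heq).symm⟩⟩

theorem isUnit_natCast_of_lt_minFac {q d : ℕ} (hd : d ≠ 0) (h : d < q.minFac) :
    IsUnit (d : ZMod q) :=
  (ZMod.isUnit_iff_coprime d q).2 (Nat.coprime_of_lt_minFac hd h).symm

theorem exists_inv_natCast_mul_sub {q n : ℕ} [NeZero q] (hn : n ≤ q.minFac)
    {A : Finset (ZMod q)} (hA : q < n * #A) (g : ZMod q) :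
    ∃ d ∈ Ico 1 n, ∃ a ∈ A, ∃ a' ∈ A, g = (d : ZMod q)⁻¹ * (a - a') := by
  obtain ⟨d, hd, hdg⟩ := exists_nsmul_mem_sub_of_card_lt (by rwa [ZMod.card]) g
  obtain ⟨a, ha, a', ha', hdg⟩ := mem_sub.1 hdg
  obtain ⟨hd1, hdn⟩ := mem_Ico.1 hd
  have hunit : IsUnit (d : ZMod q) := isUnit_natCast_of_lt_minFac (by omega) (by omega)
  refine ⟨d, hd, a, ha, a', ha', ?_⟩
  rw [hdg, nsmul_eq_mul, ← mul_assoc, ZMod.inv_mul_of_unit _ hunit, one_mul]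

theorem stmt15 (q : ℕ) (hq : 0 < q) (A : Finset (ZMod q)) (α : ℝ)
    (hA : (A.card : ℝ) = α * q) (hα : 0 < α)
    (hmin : 2 * α⁻¹ + 3 < (q.minFac : ℝ)) :
    ∃ X : Finset (ZMod q), (X.card : ℝ) ≤ α⁻¹ + 1 ∧
      ∀ g : ZMod q, ∃ x ∈ X, ∃ a ∈ A, ∃ a' ∈ A, g = x * (a - a') := by
  have : NeZero q := ⟨hq.ne'⟩
  set m := ⌊α⁻¹⌋₊ + 1
  have hfloor : (⌊α⁻¹⌋₊ : ℝ) ≤ α⁻¹ := Nat.floor_le (inv_pos.2 hα).le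
  have hm_gt : α⁻¹ < m := by push_cast [m]; exact Nat.lt_floor_add_one _
  have hm_minFac : m ≤ q.minFac := by
    have : (m : ℝ) ≤ q.minFac := by push_cast [m]; linarith [inv_pos.2 hα]
    exact_mod_cast this
  have hm_card : q < m * #A := by
    have : (q : ℝ) < m * #A := by
      rw [hA, ← mul_assoc]
      calc (q : ℝ) = α⁻¹ * α * q := by field_simp
        _ < m * α * q := by gcongr
    exact_mod_cast this
  refine ⟨(Ico 1 m).image fun d : ℕ => (d : ZMod q)⁻¹, ?_, fun g => ?_⟩
  · calc (#((Ico 1 m).image fun d : ℕ => (d : ZMod q)⁻¹) : ℝ) ≤ #(Ico 1 m) := by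
          exact_mod_cast card_image_le
      _ ≤ α⁻¹ + 1 := by rw [Nat.card_Ico, Nat.add_sub_cancel]; linarith
  · obtain ⟨d, hd, a, ha, a', ha', hg⟩ := exists_inv_natCast_mul_sub hm_minFac hm_card g
    exact ⟨_, mem_image_of_mem _ hd, a, ha, a', ha', hg⟩
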